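/- arXiv:0906.4541 — 7 statements merged into one kernel-verified Lean document; each statement's English description precedes it below -/
import Mathlib

section
/- Let F(x,y) = xy/(x+y-1) and let G(x,y) = (xy + sqrt(x(x-1)y(y-1)))/(x+y-1). Then G is intern, i.e., for all x, y in (1,∞) with x ≤ y, one has x ≤ G(x,y) ≤ y. -/
/-- G(x,y) = (xy + sqrt(x(x-1)y(y-1)))/(x+y-1) is intern on (1,∞). -/
theorem G_intern (x y : ℝ) (hx : 1 < x) (hy : 1 < y) (hxy : x ≤ y) :
    x ≤ (x * y + Real.sqrt (x * (x - 1) * y * (y - 1))) / (x + y - 1) ∧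
    (x * y + Real.sqrt (x * (x - 1) * y * (y - 1))) / (x + y - 1) ≤ y := by
  have hd : 0 < x + y - 1 := by linarith
  have ha : 0 ≤ x * (x - 1) := by nlinarith
  have hb : 0 ≤ y * (y - 1) := by nlinarith
  have hab : x * (x - 1) ≤ y * (y - 1) := by nlinarith
  have hlow : x * (x - 1) ≤ Real.sqrt (x * (x - 1) * y * (y - 1)) := by
    have h1 : Real.sqrt ((x * (x - 1)) ^ 2) ≤ Real.sqrt (x * (x - 1) * y * (y - 1)) := by
      apply Real.sqrt_le_sqrt; nlinarith [mul_le_mul_of_nonneg_left hab ha, mul_le_mul_of_nonneg_left hab hb]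
    rwa [Real.sqrt_sq ha] at h1
  have hhigh : Real.sqrt (x * (x - 1) * y * (y - 1)) ≤ y * (y - 1) := by
    have h1 : Real.sqrt (x * (x - 1) * y * (y - 1)) ≤ Real.sqrt ((y * (y - 1)) ^ 2) := by
      apply Real.sqrt_le_sqrt; nlinarith [mul_le_mul_of_nonneg_left hab ha, mul_le_mul_of_nonneg_left hab hb]
    rwa [Real.sqrt_sq hb] at h1
  constructor
  · rw [le_div_iff₀ hd]; nlinarith
  · rw [div_le_iff₀ hd]; nlinarith
end

section
/- For x, y > 1, one has F̃(G(x,y)) = F(x,y), where F(x,y) = xy/(x+y-1), F̃(x) = x²/(2x-1), and G(x,y) = (xy + sqrt(x(x-1)y(y-1)))/(x+y-1). -/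
/-!
`F̃(t) = F(x, y)` clears to the quadratic `(x + y - 1) t² - 2 x y t + x y = 0`, whose reduced
discriminant `(x y)² - (x + y - 1) x y` factors as `x (x - 1) y (y - 1)`; so `G(x, y)` is its
larger root. Since `F(x, y) > 1` and `G ≥ F`, the denominator `2 G - 1` of `F̃(G)` is positive.
-/

noncomputable def F (x y : ℝ) : ℝ := x * y / (x + y - 1)

noncomputable def Ftilde (t : ℝ) : ℝ := t ^ 2 / (2 * t - 1)

noncomputable def G (x y : ℝ) : ℝ := (x * y + √(x * (x - 1) * y * (y - 1))) / (x + y - 1)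

theorem mul_sq_sub_two_mul_add_eq_zero_of_sq_eq {a b c s : ℝ} (ha : a ≠ 0)
    (hs : s ^ 2 = b ^ 2 - a * c) :
    a * ((b + s) / a) ^ 2 - 2 * b * ((b + s) / a) + c = 0 := by
  field_simp
  linear_combination hs

theorem G_isRoot {x y : ℝ} (hxy : 0 ≤ x * (x - 1) * y * (y - 1)) (ha : x + y - 1 ≠ 0) :
    (x + y - 1) * G x y ^ 2 - 2 * (x * y) * G x y + x * y = 0 :=
  mul_sq_sub_two_mul_add_eq_zero_of_sq_eq ha <| by rw [Real.sq_sqrt hxy]; ring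

theorem one_lt_F {x y : ℝ} (hx : 1 < x) (hy : 1 < y) : 1 < F x y := by
  rw [F, one_lt_div (by linarith)]
  nlinarith [mul_pos (sub_pos.2 hx) (sub_pos.2 hy)]

theorem F_le_G {x y : ℝ} (hx : 1 < x) (hy : 1 < y) : F x y ≤ G x y := by
  unfold F G
  gcongr
  · linarith
  · exact le_add_of_nonneg_right (Real.sqrt_nonneg _)

/-- For x, y > 1, F̃(G(x,y)) = F(x,y). -/
theorem Ftilde_G_eq_F (x y : ℝ) (hx : 1 < x) (hy : 1 < y) :
    ((x * y + Real.sqrt (x * (x - 1) * y * (y - 1))) / (x + y - 1)) ^ 2 /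
      (2 * ((x * y + Real.sqrt (x * (x - 1) * y * (y - 1))) / (x + y - 1)) - 1)
    = x * y / (x + y - 1) := by
  change Ftilde (G x y) = F x y
  have hG : 1 < G x y := (one_lt_F hx hy).trans_le (F_le_G hx hy)
  have ha : x + y - 1 ≠ 0 := by linarith
  have hxy : 0 ≤ x * (x - 1) * y * (y - 1) :=
    (mul_pos (mul_pos (mul_pos (by linarith) (sub_pos.2 hx)) (by linarith)) (sub_pos.2 hy)).le
  rw [Ftilde, F, div_eq_div_iff (by linarith) ha]
  linear_combination G_isRoot hxy ha
end

section
/- Let r : ℝ² → ℝ satisfy r(λs, λt) = λ^{2H} r(s,t) for all λ > 0, the increment relation r(s,t) = r(s+T, t+T) - r(s+T, T) - r(T, t+T) + r(T,T) for all s,t,T, and r(s,0) = r(0,t) = 0. Set 2κ = r(1,1). Then for all u, v ∈ ℝ: r(u,v) + r(v,u) = 2κ(|v|^{2H} + |u|^{2H} - |u-v|^{2H}). -/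
/-- Under the scaling and increment relations with vanishing on the axes, setting
2κ = r(1,1), one has r(u,v) + r(v,u) = 2κ(|v|^{2H} + |u|^{2H} - |u-v|^{2H}). -/
theorem r_symmetrized (H : ℝ) (hH : H ∈ Set.Ioo (0 : ℝ) 1) (r : ℝ → ℝ → ℝ)
    (hscale : ∀ lam : ℝ, 0 < lam → ∀ s t : ℝ, r (lam * s) (lam * t) = lam ^ (2 * H) * r s t)
    (hincr : ∀ s t T : ℝ, r s t = r (s + T) (t + T) - r (s + T) T - r T (t + T) + r T T)
    (haxes : ∀ s t : ℝ, r s 0 = 0 ∧ r 0 t = 0)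
    (κ : ℝ) (hκ : 2 * κ = r 1 1) :
    ∀ u v : ℝ, r u v + r v u = 2 * κ * (|v| ^ (2 * H) + |u| ^ (2 * H) - |u - v| ^ (2 * H)) := by
  have h2H : (2 : ℝ) * H ≠ 0 := by
    have := hH.1; positivity
  have hneg : ∀ T : ℝ, r (-T) (-T) = r T T := by
    intro T
    have h := hincr (-T) (-T) T
    simp only [neg_add_cancel] at h
    rw [(haxes 0 T).2, (haxes T 0).1, (haxes 0 0).1] at h
    linarith
  have hdiag : ∀ u : ℝ, r u u = 2 * κ * |u| ^ (2 * H) := by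
    intro u
    rcases lt_trichotomy u 0 with hu | hu | hu
    · have h := hscale (-u) (by linarith) 1 1
      rw [mul_one] at h
      rw [hneg u] at h
      rw [h, abs_of_neg hu, hκ]; ring
    · subst hu
      rw [(haxes 0 0).1, abs_zero, Real.zero_rpow h2H, mul_zero]
    · have h := hscale u hu 1 1
      rw [mul_one] at h
      rw [h, abs_of_pos hu, hκ]; ring
  intro u v
  have h := hincr (u - v) (u - v) v
  rw [sub_add_cancel] at h
  rw [hdiag u, hdiag v, hdiag (u - v)] at h
  linarith
end

section
/- Fix H ∈ (0,1), H ≠ 1/2, and constants c, c' ∈ ℝ. Define g₊ : ℝ → ℝ by g₊(t) = c' + c'|t|^{2H} - c'|1-t|^{2H} for t < 0, g₊(t) = c' + c|t|^{2H} - c'|1-t|^{2H} for 0 ≤ t ≤ 1, and g₊(t) = c' + c|t|^{2H} - c|1-t|^{2H} for t > 1. Then g₊ satisfies, for all t ∈ ℝ and all T > 0: g₊(t) = (T+1)^{2H} g₊((T+t)/(T+1)) - T^{2H} g₊((T+t)/T) - (T+1)^{2H} g₊(T/(T+1)) + T^{2H} g₊(1). -/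
/-!
Write `g₊(s) = c' + a(s)|s|^p - b(s)|1 - s|^p` with `p = 2H`, where the coefficient `a` jumps
at `0` and `b` at `1`. Multiplying `g₊(u/X)` by `X^p` for `X > 0` rescales it to
`c' X^p + a(u)|u|^p - b_X(u)|X - u|^p`, with the jump of `b` moved to `X`. In the four terms of
the equation the `|T + t|^p` contributions cancel, the constants sum to `c'`, and what is left is
`c' + a(t)|t|^p - b(t)|1 - t|^p`, up to the value of `a` at `t = 0`, where `|t|^p = 0`.
-/

open Real

noncomputable def gPlus (p c c' s : ℝ) : ℝ :=
  c' + (if s < 0 then c' else c) * |s| ^ p - (if s ≤ 1 then c' else c) * |1 - s| ^ p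

lemma gPlus_eq_piecewise (p c c' s : ℝ) :
    gPlus p c c' s =
      if s < 0 then c' + c' * |s| ^ p - c' * |1 - s| ^ p
      else if s ≤ 1 then c' + c * |s| ^ p - c' * |1 - s| ^ p
      else c' + c * |s| ^ p - c * |1 - s| ^ p := by
  unfold gPlus
  by_cases hs0 : s < 0
  · simp [hs0, (hs0.trans one_pos).le]
  · by_cases hs1 : s ≤ 1 <;> simp [hs0, hs1]

lemma rpow_mul_gPlus_div {p : ℝ} (c c' : ℝ) {X : ℝ} (hX : 0 < X) (u : ℝ) :
    X ^ p * gPlus p c c' (u / X) =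
      c' * X ^ p + (if u < 0 then c' else c) * |u| ^ p
        - (if u ≤ X then c' else c) * |X - u| ^ p := by
  have hXp : X ^ p ≠ 0 := (rpow_pos_of_pos hX p).ne'
  have rescale : ∀ v : ℝ, X ^ p * |v / X| ^ p = |v| ^ p := fun v => by
    rw [abs_div, abs_of_pos hX, div_rpow (abs_nonneg v) hX.le, mul_div_cancel₀ _ hXp]
  have hneg : u / X < 0 ↔ u < 0 := by rw [div_lt_iff₀ hX, zero_mul]
  have hsub : 1 - u / X = (X - u) / X := by field_simp
  simp only [gPlus, hneg, div_le_one₀ hX, hsub]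
  linear_combination (if u < 0 then c' else c) * rescale u
    - (if u ≤ X then c' else c) * rescale (X - u)

theorem gPlus_functional_equation {p : ℝ} (hp : p ≠ 0) (c c' t : ℝ) {T : ℝ} (hT : 0 < T) :
    gPlus p c c' t = (T + 1) ^ p * gPlus p c c' ((T + t) / (T + 1))
      - T ^ p * gPlus p c c' ((T + t) / T)
      - (T + 1) ^ p * gPlus p c c' (T / (T + 1)) + T ^ p * gPlus p c c' 1 := by
  have hT1 : 0 < T + 1 := by linarith
  have hone : gPlus p c c' 1 = gPlus p c c' (T / T) := by rw [div_self hT.ne']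
  rw [hone, rpow_mul_gPlus_div c c' hT1, rpow_mul_gPlus_div c c' hT,
    rpow_mul_gPlus_div c c' hT1, rpow_mul_gPlus_div c c' hT]
  have hsub₁ : T + 1 - (T + t) = 1 - t := by ring
  have hsub₂ : |T - (T + t)| = |t| := by rw [sub_add_cancel_left, abs_neg]
  have hle₁ : T + t ≤ T + 1 ↔ t ≤ 1 := add_le_add_iff_left T
  have hle₂ : T + t ≤ T ↔ t ≤ 0 := add_le_iff_nonpos_right T
  simp only [gPlus, hsub₁, hsub₂, hle₁, hle₂, sub_self, add_sub_cancel_left, abs_zero, zero_rpow hp, abs_one,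
    one_rpow, abs_of_pos hT, hT.not_gt, le_add_iff_nonneg_right, zero_le_one, le_refl,
    if_true, if_false]
  -- the coefficients of `|t|^p` differ only at `t = 0`
  rcases lt_trichotomy t 0 with ht | rfl | ht
  · simp only [ht, ht.le, if_true]; ring
  · simp only [abs_zero, zero_rpow hp]; ring
  · simp only [ht.not_gt, ht.not_ge, if_false]; ring

theorem gplus_solves_equation_general (H c c' : ℝ) (hH : H ∈ Set.Ioo (0 : ℝ) 1)
    (g : ℝ → ℝ)
    (hg : ∀ t : ℝ, g t =
      if t < 0 then c' + c' * |t| ^ (2 * H) - c' * |1 - t| ^ (2 * H)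
      else if t ≤ 1 then c' + c * |t| ^ (2 * H) - c' * |1 - t| ^ (2 * H)
      else c' + c * |t| ^ (2 * H) - c * |1 - t| ^ (2 * H)) :
    ∀ t : ℝ, ∀ T : ℝ, 0 < T →
      g t = (T + 1) ^ (2 * H) * g ((T + t) / (T + 1)) - T ^ (2 * H) * g ((T + t) / T)
            - (T + 1) ^ (2 * H) * g (T / (T + 1)) + T ^ (2 * H) * g 1 := by
  have hg' : g = gPlus (2 * H) c c' :=
    funext fun s => (hg s).trans (gPlus_eq_piecewise _ _ _ s).symm
  intro t T hT
  subst hg'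
  exact gPlus_functional_equation (by linarith [hH.1]) c c' t hT

/-- The piecewise function g₊ (case H ≠ 1/2) satisfies the functional equation
g₊(t) = (T+1)^{2H} g₊((T+t)/(T+1)) - T^{2H} g₊((T+t)/T)
        - (T+1)^{2H} g₊(T/(T+1)) + T^{2H} g₊(1) for all t ∈ ℝ, T > 0. -/
theorem gplus_solves_equation (H c c' : ℝ) (hH : H ∈ Set.Ioo (0 : ℝ) 1) (hH2 : H ≠ 1 / 2)
    (g : ℝ → ℝ)
    (hg : ∀ t : ℝ, g t =
      if t < 0 then c' + c' * |t| ^ (2 * H) - c' * |1 - t| ^ (2 * H)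
      else if t ≤ 1 then c' + c * |t| ^ (2 * H) - c' * |1 - t| ^ (2 * H)
      else c' + c * |t| ^ (2 * H) - c * |1 - t| ^ (2 * H)) :
    ∀ t : ℝ, ∀ T : ℝ, 0 < T →
      g t = (T + 1) ^ (2 * H) * g ((T + t) / (T + 1)) - T ^ (2 * H) * g ((T + t) / T)
            - (T + 1) ^ (2 * H) * g (T / (T + 1)) + T ^ (2 * H) * g 1 :=
  gplus_solves_equation_general H c c' hH g hg
end

section
/- Fix constants d, f ∈ ℝ and define g₊ : ℝ → ℝ by g₊(t) = f(t log|t| - (t-1) log|t-1|) for t ≤ 0 and g₊(t) = d·min(1,t) + f(t log|t| - (t-1) log|t-1|) for t > 0 (with the convention 0·log 0 = 0). Then g₊ satisfies, for all t ∈ ℝ and all T > 0: g₊(t) = (T+1) g₊((T+t)/(T+1)) - T g₊((T+t)/T) - (T+1) g₊(T/(T+1)) + T g₊(1). -/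
/-!
Both parts of `g₊` are increments `ψ t - ψ (t - 1)` of a function `ψ` that is homogeneous of
degree one up to a linear correction, `y ψ (x / y) = ψ x + x ℓ(y)`: for `d · min 1 t` take
`ψ x = d · max x 0`, for the logarithmic part `ψ x = f · x log |x|` with `ℓ(y) = -f log y`.
Multiplying the equation out by the weights `T + 1` and `T` turns every term into such an
increment, the `ψ (T + t)` and `ℓ` contributions cancel in pairs, and what is left is
`ψ t - ψ (t - 1) + ψ (-1) - T ψ 0`, where `ψ (-1) = ψ 0 = 0`.
-/

theorem increment_solves_equation_half {ψ ℓ h : ℝ → ℝ}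
    (hψ : ∀ x y : ℝ, 0 < y → y * ψ (x / y) = ψ x + x * ℓ y) (hψ_neg_one : ψ (-1) = 0)
    (hh : ∀ t, h t = ψ t - ψ (t - 1)) (t T : ℝ) (hT : 0 < T) :
    h t = (T + 1) * h ((T + t) / (T + 1)) - T * h ((T + t) / T)
      - (T + 1) * h (T / (T + 1)) + T * h 1 := by
  have hscale : ∀ x y : ℝ, 0 < y → y * h (x / y) = ψ x - ψ (x - y) + y * ℓ y := by
    intro x y hy
    have hsub : x / y - 1 = (x - y) / y := by field_simp
    rw [hh, hsub, mul_sub, hψ x y hy, hψ (x - y) y hy]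
    ring
  have hψ_zero : ψ 0 = 0 := by linarith [hψ 0 2 two_pos, zero_div (2 : ℝ)]
  have hT₁ : (0 : ℝ) < T + 1 := by linarith
  have h₁ := hscale (T + t) (T + 1) hT₁
  have h₂ := hscale (T + t) T hT
  have h₃ := hscale T (T + 1) hT₁
  have h₄ := hscale T T hT
  rw [show T + t - (T + 1) = t - 1 by ring] at h₁
  rw [show T + t - T = t by ring] at h₂
  rw [show T - (T + 1) = -1 by ring, hψ_neg_one] at h₃
  rw [div_self hT.ne', sub_self, hψ_zero] at h₄
  rw [hh t, h₁, h₂, h₃, h₄]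
  ring

theorem mul_max_div_zero {x y : ℝ} (hy : 0 < y) : y * max (x / y) 0 = max x 0 := by
  rw [mul_max_of_nonneg _ _ hy.le, mul_div_cancel₀ x hy.ne', mul_zero]

theorem mul_mul_log_abs_div {x y : ℝ} (hy : 0 < y) :
    y * (x / y * Real.log |x / y|) = x * Real.log |x| - x * Real.log y := by
  rcases eq_or_ne x 0 with rfl | hx
  · simp
  · rw [abs_div, abs_of_pos hy, Real.log_div (abs_ne_zero.2 hx) hy.ne']
    field_simp

theorem min_one_eq_max_sub_max (t : ℝ) (ht : 0 < t) : min 1 t = max t 0 - max (t - 1) 0 := by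
  rcases le_total t 1 with ht₁ | ht₁
  · rw [min_eq_right ht₁, max_eq_left ht.le, max_eq_right (by linarith)]
    ring
  · rw [min_eq_left ht₁, max_eq_left ht.le, max_eq_left (by linarith)]
    ring

/-- The piecewise function g₊ (case 2H = 1, with the convention 0·log 0 = 0)
satisfies g₊(t) = (T+1) g₊((T+t)/(T+1)) - T g₊((T+t)/T) - (T+1) g₊(T/(T+1)) + T g₊(1)
for all t ∈ ℝ, T > 0. -/
theorem gplus_solves_equation_half (d f : ℝ) (g : ℝ → ℝ)
    (hg : ∀ t : ℝ, g t =
      if t ≤ 0 then f * (t * Real.log |t| - (t - 1) * Real.log |t - 1|)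
      else d * min 1 t + f * (t * Real.log |t| - (t - 1) * Real.log |t - 1|)) :
    ∀ t : ℝ, ∀ T : ℝ, 0 < T →
      g t = (T + 1) * g ((T + t) / (T + 1)) - T * g ((T + t) / T)
            - (T + 1) * g (T / (T + 1)) + T * g 1 := by
  set ψ : ℝ → ℝ := fun x ↦ d * max x 0 + f * (x * Real.log |x|)
  refine increment_solves_equation_half (ψ := ψ) (ℓ := fun y ↦ -f * Real.log y) ?_ ?_ ?_
  · intro x y hy
    simp only [ψ, mul_add, mul_left_comm y d, mul_left_comm y f, mul_max_div_zero hy,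
      mul_mul_log_abs_div hy]
    ring
  · simp [ψ]
  · intro t
    rw [hg t]
    split_ifs with ht
    · simp only [ψ, max_eq_right ht, max_eq_right (by linarith : t - 1 ≤ 0)]
      ring
    · rw [min_one_eq_max_sub_max t (not_le.1 ht)]
      ring
end

section
/- Let X be a p-variate mean-zero Gaussian-type second-order process with stationary increments, X(0)=0, vector self-similar with exponents H₁,...,H_p ∈ (0,1), such that t ↦ E[X_i(t)X_j(1)] is continuously differentiable on (0,1)∪(1,∞) for all i,j. If i ≠ j and H_i + H_j ≠ 1, then there exist constants c_{ij}, c_{ji} ∈ ℝ such that for all s,t ∈ ℝ, E[X_i(s)X_j(t)] = (σ_iσ_j/2){c_{ij}(s)|s|^{H_i+H_j} + c_{ji}(t)|t|^{H_i+H_j} - c_{ji}(t-s)|t-s|^{H_i+H_j}}, where c_{ij}(u) := c_{ij} if u > 0 and c_{ji} if u < 0, and σ_i² = Var(X_i(1)). -/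
/-!
Write `∂₁r(x, k)` for the derivative of `y ↦ r y k` at `x`. Stationary increments give
`r y k = r a k + r (y - a) (k - a) - r (y - a) (-a)`, hence
`∂₁r(x, k) = u (k - x) - u (-x)` with `u w = ∂₁r(1, 1 + w)`; these derivatives exist by
self-similarity and the differentiability of `r · 1`. Self-similarity makes `∂₁r` homogeneous
of degree `H - 1`, so `u (l m) = u l + l ^ (H - 1) (u m - u 1)` for `l > 0`, and when `H ≠ 1`
this forces `u` to be a constant plus `a w ^ (H - 1)` on `w > 0` and `b (-w) ^ (H - 1)` on
`w < 0`. Consequently, for a suitable two-sided power `N`, the continuous functions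
`x ↦ r x t` and `x ↦ N (-x) + N t - N (t - x)` have the same derivative off `{0, t}` and
agree at `x = 0`, so they coincide.
-/

open Set

lemma eq_of_hasDerivAt_zero_off_countable {E : Type*} [NormedAddCommGroup E] [NormedSpace ℝ E]
    [CompleteSpace E] {f : ℝ → E} {s : Set ℝ} (hs : s.Countable) (hf : Continuous f)
    (hd : ∀ x ∉ s, HasDerivAt f 0 x) (a b : ℝ) : f a = f b := by
  have h := MeasureTheory.integral_eq_of_hasDerivAt_off_countable f (fun _ => 0) (a := a)
    (b := b) hs hf.continuousOn (fun x hx => hd x hx.2) intervalIntegrable_const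
  rw [intervalIntegral.integral_zero, eq_comm, sub_eq_zero] at h
  exact h.symm

noncomputable def twoSidedPow (A B H w : ℝ) : ℝ := (if 0 < w then A else B) * |w| ^ H

section TwoSidedPow

variable {A B H w : ℝ}

lemma twoSidedPow_of_pos (hw : 0 < w) : twoSidedPow A B H w = A * w ^ H := by
  rw [twoSidedPow, if_pos hw, abs_of_pos hw]

lemma twoSidedPow_of_neg (hw : w < 0) : twoSidedPow A B H w = B * (-w) ^ H := by
  rw [twoSidedPow, if_neg hw.not_gt, abs_of_neg hw]

lemma twoSidedPow_zero (hH : H ≠ 0) : twoSidedPow A B H 0 = 0 := by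
  simp [twoSidedPow, Real.zero_rpow hH]

lemma twoSidedPow_neg (hH : H ≠ 0) : twoSidedPow A B H (-w) = twoSidedPow B A H w := by
  rcases lt_trichotomy w 0 with hw | rfl | hw
  · rw [twoSidedPow_of_pos (neg_pos.2 hw), twoSidedPow_of_neg hw]
  · simp only [neg_zero, twoSidedPow_zero hH]
  · rw [twoSidedPow_of_neg (neg_lt_zero.2 hw), neg_neg, twoSidedPow_of_pos hw]

lemma twoSidedPow_mul (c : ℝ) : twoSidedPow (c * A) (c * B) H w = c * twoSidedPow A B H w := by
  unfold twoSidedPow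
  split_ifs <;> ring

lemma continuous_twoSidedPow (hH : 0 < H) : Continuous (twoSidedPow A B H) := by
  have h : twoSidedPow A B H = fun w => A * max w 0 ^ H + B * max (-w) 0 ^ H := by
    funext w
    rcases lt_trichotomy w 0 with hw | rfl | hw
    · simp [twoSidedPow_of_neg hw, hw.le, Real.zero_rpow hH.ne']
    · simp [twoSidedPow_zero hH.ne', Real.zero_rpow hH.ne']
    · simp [twoSidedPow_of_pos hw, hw.le, Real.zero_rpow hH.ne']
  rw [h]
  have hpow := Real.continuous_rpow_const hH.le
  fun_prop

lemma hasDerivAt_twoSidedPow (hw : w ≠ 0) :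
    HasDerivAt (twoSidedPow A B H) (twoSidedPow (A * H) (-(B * H)) (H - 1) w) w := by
  rcases hw.lt_or_gt with hw | hw
  · have hpow : HasDerivAt (fun x => B * (-x) ^ H) (B * (H * (-w) ^ (H - 1) * -1)) w :=
      (((Real.hasDerivAt_rpow_const (Or.inl (neg_ne_zero.2 hw.ne))).comp w
        (hasDerivAt_neg w)).const_mul B)
    rw [twoSidedPow_of_neg hw]
    exact (hpow.congr_of_eventuallyEq (Filter.eventually_of_mem (Iio_mem_nhds hw)
      fun x hx => twoSidedPow_of_neg hx)).congr_deriv (by ring)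
  · have hpow : HasDerivAt (fun x => A * x ^ H) (A * (H * w ^ (H - 1))) w :=
      (Real.hasDerivAt_rpow_const (Or.inl hw.ne')).const_mul A
    rw [twoSidedPow_of_pos hw]
    exact (hpow.congr_of_eventuallyEq (Filter.eventually_of_mem (Ioi_mem_nhds hw)
      fun x hx => twoSidedPow_of_pos hx)).congr_deriv (by ring)

end TwoSidedPow

lemma exists_eq_const_add_twoSidedPow {u : ℝ → ℝ} {p : ℝ} (hp : p ≠ 0)
    (hu : ∀ l, 0 < l → ∀ m, m ≠ 0 → u (l * m) = u l + l ^ p * (u m - u 1)) :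
    ∃ A B c, ∀ w, w ≠ 0 → u w = c + twoSidedPow A B p w := by
  have h2p : 1 - (2 : ℝ) ^ p ≠ 0 := by
    rw [sub_ne_zero, ne_comm, ← Real.rpow_zero 2, Ne,
      Real.rpow_right_inj two_pos (by norm_num)]
    exact hp
  set K := (u 2 - u 1) / (1 - 2 ^ p)
  have hpos : ∀ l, 0 < l → u l = u 1 + K - K * l ^ p := by
    intro l hl
    have h := hu l hl 2 two_ne_zero
    have h' := hu 2 two_pos l hl.ne'
    rw [mul_comm] at h'
    simp only [K]
    field_simp
    linear_combination h' - h
  refine ⟨-K, u (-1) - u 1 - K, u 1 + K, fun w hw => ?_⟩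
  rcases hw.lt_or_gt with hw | hw
  · have h := hu (-w) (neg_pos.2 hw) (-1) (by norm_num)
    rw [neg_mul_neg, mul_one, hpos (-w) (neg_pos.2 hw)] at h
    rw [h, twoSidedPow_of_neg hw]
    ring
  · rw [hpos w hw, twoSidedPow_of_pos hw]
    ring

def HasStationaryIncrements (r : ℝ → ℝ → ℝ) : Prop :=
  ∀ s t T, r s t = r (s + T) (t + T) - r (s + T) T - r T (t + T) + r T T

def IsSelfSimilar (r : ℝ → ℝ → ℝ) (H : ℝ) : Prop :=
  ∀ l, 0 < l → ∀ s t, r (l * s) (l * t) = l ^ H * r s t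

noncomputable def derivFstAtOne (r : ℝ → ℝ → ℝ) (w : ℝ) : ℝ := deriv (fun y => r y (1 + w)) 1

section Covariance

variable {r : ℝ → ℝ → ℝ} {H : ℝ}

namespace HasStationaryIncrements

lemma apply_zero_right (hr : HasStationaryIncrements r) (s : ℝ) : r s 0 = 0 := by
  simpa using hr s 0 0

lemma apply_zero_left (hr : HasStationaryIncrements r) (t : ℝ) : r 0 t = 0 := by
  simpa using hr 0 t 0

lemma shift (hr : HasStationaryIncrements r) (a y k : ℝ) :
    r y k = r a k + r (y - a) (k - a) - r (y - a) (-a) := by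
  have hk := hr (y - a) (k - a) a
  have h0 := hr (y - a) (-a) a
  simp only [sub_add_cancel, neg_add_cancel, hr.apply_zero_right] at hk h0
  linear_combination h0 - hk

end HasStationaryIncrements

lemma IsSelfSimilar.apply_div (hs : IsSelfSimilar r H) {z : ℝ} (hz : 0 < z) (y k : ℝ) :
    r y (z * k) = z ^ H * r (y / z) k := by
  rw [← hs z hz, mul_div_cancel₀ y hz.ne']

lemma IsSelfSimilar.hasDerivAt_fst (hs : IsSelfSimilar r H) {l x k d : ℝ} (hl : 0 < l)
    (hd : HasDerivAt (fun y => r y k) d x) :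
    HasDerivAt (fun y => r y (l * k)) (l ^ (H - 1) * d) (l * x) := by
  have hd' : HasDerivAt (fun y => r y k) d (l * x / l) := by rwa [mul_div_cancel_left₀ x hl.ne']
  have h := (hd'.comp (l * x) ((hasDerivAt_id (l * x)).div_const l)).const_mul (l ^ H)
  rw [funext fun y => hs.apply_div hl y k, Real.rpow_sub_one hl.ne']
  exact h.congr_deriv (by field_simp)

lemma IsSelfSimilar.differentiableAt_fst (hs : IsSelfSimilar r H)
    (hd : DifferentiableOn ℝ (fun t => r t 1) (Ioo 0 1 ∪ Ioi 1)) {x z : ℝ} (hz : 0 < z)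
    (hx : 0 < x) (hxz : x ≠ z) : DifferentiableAt ℝ (fun y => r y z) x := by
  have hmem : x / z ∈ Ioo 0 1 ∪ Ioi 1 := by
    rcases hxz.lt_or_gt with h | h
    · exact Or.inl ⟨div_pos hx hz, (div_lt_one hz).2 h⟩
    · exact Or.inr ((one_lt_div hz).2 h)
  have h := (hd.differentiableAt ((isOpen_Ioo.union isOpen_Ioi).mem_nhds hmem)).comp x
    (differentiableAt_id.div_const z)
  rw [show (fun y => r y z) = fun y => z ^ H * r (y / z) 1 from
    funext fun y => by simpa using hs.apply_div hz y 1]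
  exact h.const_mul _

lemma differentiableAt_fst_one (hr : HasStationaryIncrements r) (hs : IsSelfSimilar r H)
    (hd : DifferentiableOn ℝ (fun t => r t 1) (Ioo 0 1 ∪ Ioi 1)) {z : ℝ} (hz : z ≠ 1) :
    DifferentiableAt ℝ (fun y => r y z) 1 := by
  rcases lt_trichotomy z 0 with hz0 | rfl | hz0
  · have h := hs.differentiableAt_fst hd (x := 1 - z) (neg_pos.2 hz0) (by linarith)
      (by intro h; linarith)
    rw [funext fun y => hr.shift z y z]
    simp only [sub_self, hr.apply_zero_right, add_zero]
    exact (differentiableAt_const _).sub (h.comp 1 (differentiableAt_id.sub_const z))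
  · simp only [hr.apply_zero_right]
    exact differentiableAt_const _
  · exact hs.differentiableAt_fst hd hz0 one_pos (Ne.symm hz)

lemma hasDerivAt_fst (hr : HasStationaryIncrements r) (hs : IsSelfSimilar r H)
    (hd : DifferentiableOn ℝ (fun t => r t 1) (Ioo 0 1 ∪ Ioi 1)) {x k : ℝ} (hx : x ≠ 0)
    (hkx : k ≠ x) :
    HasDerivAt (fun y => r y k) (derivFstAtOne r (k - x) - derivFstAtOne r (-x)) x := by
  have hslice : ∀ w, w ≠ 0 →
      HasDerivAt (fun y => r y (1 + w)) (derivFstAtOne r w) (x - (x - 1)) := by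
    intro w hw
    rw [sub_sub_cancel]
    exact (differentiableAt_fst_one hr hs hd (by simpa using hw)).hasDerivAt
  have htrans : HasDerivAt (fun y => y - (x - 1)) 1 x := (hasDerivAt_id x).sub_const _
  have h := (((hslice _ (sub_ne_zero.2 hkx)).comp x htrans).sub
    ((hslice _ (neg_ne_zero.2 hx)).comp x htrans)).const_add (r (x - 1) k)
  have hfun : (fun y => r y k) = fun y =>
      r (x - 1) k + (r (y - (x - 1)) (1 + (k - x)) - r (y - (x - 1)) (1 + -x)) := by
    funext y
    rw [hr.shift (x - 1) y k, show k - (x - 1) = 1 + (k - x) by ring,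
      show -(x - 1) = 1 + -x by ring]
    ring
  rw [hfun]
  exact h.congr_deriv (by ring)

lemma derivFstAtOne_mul (hr : HasStationaryIncrements r) (hs : IsSelfSimilar r H)
    (hd : DifferentiableOn ℝ (fun t => r t 1) (Ioo 0 1 ∪ Ioi 1)) {l m : ℝ} (hl : 0 < l)
    (hm : m ≠ 0) :
    derivFstAtOne r (l * m) =
      derivFstAtOne r l + l ^ (H - 1) * (derivFstAtOne r m - derivFstAtOne r 1) := by
  have hm1 : m - 1 ≠ -1 := fun h => hm (by linarith)
  have hscaled := hs.hasDerivAt_fst hl (hasDerivAt_fst hr hs hd (by norm_num) hm1)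
  have hdirect := hasDerivAt_fst hr hs hd (mul_ne_zero hl.ne' (by norm_num))
    (fun h => hm1 (mul_left_cancel₀ hl.ne' h))
  have h := hdirect.unique hscaled
  rw [show l * (m - 1) - l * -1 = l * m by ring, show -(l * -1) = l by ring,
    show m - 1 - -1 = m by ring, neg_neg] at h
  linear_combination h

lemma exists_hasDerivAt_fst_eq_twoSidedPow (hr : HasStationaryIncrements r)
    (hs : IsSelfSimilar r H) (hd : DifferentiableOn ℝ (fun t => r t 1) (Ioo 0 1 ∪ Ioi 1))
    (hH : H ≠ 1) :
    ∃ A B, ∀ x k, x ≠ 0 → k ≠ x → HasDerivAt (fun y => r y k)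
      (twoSidedPow A B (H - 1) (k - x) - twoSidedPow A B (H - 1) (-x)) x := by
  obtain ⟨A, B, c, hu⟩ := exists_eq_const_add_twoSidedPow (sub_ne_zero.2 hH)
    fun l hl m hm => derivFstAtOne_mul hr hs hd hl hm
  refine ⟨A, B, fun x k hx hkx => ?_⟩
  have h := hasDerivAt_fst hr hs hd hx hkx
  rwa [hu _ (sub_ne_zero.2 hkx), hu _ (neg_ne_zero.2 hx), add_sub_add_left_eq_sub] at h

lemma exists_eq_twoSidedPow (hr : HasStationaryIncrements r) (hs : IsSelfSimilar r H)
    (hd : DifferentiableOn ℝ (fun t => r t 1) (Ioo 0 1 ∪ Ioi 1))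
    (hc : ∀ t, Continuous fun s => r s t) (hH₀ : 0 < H) (hH₁ : H ≠ 1) :
    ∃ A B, ∀ s t,
      r s t = twoSidedPow A B H (-s) + twoSidedPow A B H t - twoSidedPow A B H (t - s) := by
  obtain ⟨A, B, hD⟩ := exists_hasDerivAt_fst_eq_twoSidedPow hr hs hd hH₁
  set N := twoSidedPow (A / H) (-(B / H)) H
  have hN : ∀ w, w ≠ 0 → HasDerivAt N (twoSidedPow A B (H - 1) w) w := fun w hw => by
    have h := hasDerivAt_twoSidedPow (A := A / H) (B := -(B / H)) (H := H) hw
    rwa [div_mul_cancel₀ _ hH₀.ne', neg_mul, div_mul_cancel₀ _ hH₀.ne', neg_neg] at h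
  refine ⟨A / H, -(B / H), fun s t => ?_⟩
  have hNc : Continuous N := continuous_twoSidedPow hH₀
  have hconst := eq_of_hasDerivAt_zero_off_countable
    (f := fun x => r x t - (N (-x) + N t - N (t - x))) ((countable_singleton t).insert 0)
    (by fun_prop) ?_ s 0
  · simp only [hr.apply_zero_left, neg_zero, twoSidedPow_zero hH₀.ne', sub_zero, N] at hconst
    linear_combination hconst
  · intro x hx
    simp only [mem_insert_iff, mem_singleton_iff, not_or] at hx
    obtain ⟨hx0, hxt⟩ := hx
    have hslice := hD x t hx0 (Ne.symm hxt)
    have hneg := (hN (-x) (neg_ne_zero.2 hx0)).comp x (hasDerivAt_neg x)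
    have hsub := (hN (t - x) (sub_ne_zero.2 (Ne.symm hxt))).comp x
      ((hasDerivAt_id x).const_sub t)
    exact (hslice.sub ((hneg.add_const (N t)).sub hsub)).congr_deriv (by ring)

end Covariance

theorem cross_covariance_form_general (Hi Hj σi σj : ℝ)
    (hHi : Hi ∈ Set.Ioo (0 : ℝ) 1) (hHj : Hj ∈ Set.Ioo (0 : ℝ) 1)
    (hsum : Hi + Hj ≠ 1) (hσi : 0 < σi) (hσj : 0 < σj)
    (r : ℝ → ℝ → ℝ)
    (hcont : Continuous fun p : ℝ × ℝ => r p.1 p.2)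
    (hscale : ∀ lam : ℝ, 0 < lam → ∀ s t : ℝ,
      r (lam * s) (lam * t) = lam ^ (Hi + Hj) * r s t)
    (hincr : ∀ s t T : ℝ, r s t = r (s + T) (t + T) - r (s + T) T - r T (t + T) + r T T)
    (hdiff : ContDiffOn ℝ 1 (fun t => r t 1) (Set.Ioo 0 1 ∪ Set.Ioi 1)) :
    ∃ cij cji : ℝ, ∀ s t : ℝ,
      r s t = σi * σj / 2 *
        ((if 0 < s then cij else cji) * |s| ^ (Hi + Hj)
          + (if 0 < t then cji else cij) * |t| ^ (Hi + Hj)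
          - (if 0 < t - s then cji else cij) * |t - s| ^ (Hi + Hj)) := by
  have hH : 0 < Hi + Hj := add_pos hHi.1 hHj.1
  obtain ⟨A, B, hAB⟩ := exists_eq_twoSidedPow hincr hscale (hdiff.differentiableOn one_ne_zero)
    (fun t => hcont.comp (continuous_id.prodMk continuous_const)) hH hsum
  set c := σi * σj / 2
  have hc : c ≠ 0 := by positivity
  have hN : ∀ w, twoSidedPow A B (Hi + Hj) w = c * twoSidedPow (A / c) (B / c) (Hi + Hj) w :=
    fun w => by rw [← twoSidedPow_mul, mul_div_cancel₀ _ hc, mul_div_cancel₀ _ hc]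
  refine ⟨B / c, A / c, fun s t => ?_⟩
  rw [hAB, hN (-s), twoSidedPow_neg hH.ne', hN t, hN (t - s)]
  simp only [twoSidedPow]
  ring

/-- Main theorem (case H_i + H_j ≠ 1), at the level of the cross-covariance function
r(s,t) = E[X_i(s)X_j(t)]: if r is jointly continuous, vanishes on the axes, satisfies the
self-similarity scaling with exponent H_i + H_j and the stationary-increment relation, and
t ↦ r(t,1) is C¹ on (0,1) ∪ (1,∞), then there exist c_{ij}, c_{ji} ∈ ℝ with
r(s,t) = (σᵢσⱼ/2){c_{ij}(s)|s|^{H_i+H_j} + c_{ji}(t)|t|^{H_i+H_j} - c_{ji}(t-s)|t-s|^{H_i+H_j}}. -/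
theorem cross_covariance_form (Hi Hj σi σj : ℝ)
    (hHi : Hi ∈ Set.Ioo (0 : ℝ) 1) (hHj : Hj ∈ Set.Ioo (0 : ℝ) 1)
    (hsum : Hi + Hj ≠ 1) (hσi : 0 < σi) (hσj : 0 < σj)
    (r : ℝ → ℝ → ℝ)
    (hcont : Continuous fun p : ℝ × ℝ => r p.1 p.2)
    (haxes : ∀ s t : ℝ, r s 0 = 0 ∧ r 0 t = 0)
    (hscale : ∀ lam : ℝ, 0 < lam → ∀ s t : ℝ,
      r (lam * s) (lam * t) = lam ^ (Hi + Hj) * r s t)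
    (hincr : ∀ s t T : ℝ, r s t = r (s + T) (t + T) - r (s + T) T - r T (t + T) + r T T)
    (hdiff : ContDiffOn ℝ 1 (fun t => r t 1) (Set.Ioo 0 1 ∪ Set.Ioi 1)) :
    ∃ cij cji : ℝ, ∀ s t : ℝ,
      r s t = σi * σj / 2 *
        ((if 0 < s then cij else cji) * |s| ^ (Hi + Hj)
          + (if 0 < t then cji else cij) * |t| ^ (Hi + Hj)
          - (if 0 < t - s then cji else cij) * |t - s| ^ (Hi + Hj)) :=
  cross_covariance_form_general Hi Hj σi σj hHi hHj hsum hσi hσj r hcont hscale hincr hdiff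
end

section
/- Let g : (1,∞) → ℝ be differentiable and satisfy g'(t) = (T+1)^{2H-1} g'((T+t)/(T+1)) - T^{2H-1} g'((T+t)/T) for all t > 1, T > 0, where H ∈ (0,1). Then with F(x,y) = xy/(x+y-1), for all x, y ∈ (1,∞): g'(F(x,y)) = ((y-1)/(x+y-1))^{2H-1} g'(x) + (x/(x+y-1))^{2H-1} g'(y). -/
/-!
Put `T = x / (y - 1)`, the inverse of the change of variables `y = (T + x) / T`. Then
`(T + x) / (T + 1) = x y / (x + y - 1)`, `1 / (T + 1) = (y - 1) / (x + y - 1)` and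
`T / (T + 1) = x / (x + y - 1)`, so the functional equation at `t = x` reads
`g'(x) = (T + 1)^e g'(F(x, y)) - T^e g'(y)` with `e = 2H - 1`; solving for `g'(F(x, y))`
gives the claim.
-/

namespace ChangeOfVariables

lemma eq_inv_rpow_mul_add_div_rpow_mul {a b e u v w : ℝ} (ha : 0 < a) (hb : 0 ≤ b)
    (h : u = a ^ e * v - b ^ e * w) : v = a⁻¹ ^ e * u + (b / a) ^ e * w := by
  have hae : a ^ e ≠ 0 := (Real.rpow_pos_of_pos ha e).ne'
  rw [Real.inv_rpow ha.le, Real.div_rpow hb ha.le, h]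
  field_simp
  ring

variable {x y : ℝ} (hx : 1 < x) (hy : 1 < y)
include hy

lemma div_sub_one_add_one : x / (y - 1) + 1 = (x + y - 1) / (y - 1) := by
  rw [div_add_one (by linarith)]
  ring

lemma inv_div_sub_one_add_one : (x / (y - 1) + 1)⁻¹ = (y - 1) / (x + y - 1) := by
  rw [div_sub_one_add_one hy, inv_div]

include hx

lemma div_sub_one_add_div_eq : (x / (y - 1) + x) / (x / (y - 1) + 1) = x * y / (x + y - 1) := by
  have : y - 1 ≠ 0 := by linarith
  have : x + y - 1 ≠ 0 := by linarith
  rw [div_sub_one_add_one hy]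
  field_simp
  ring

lemma div_sub_one_add_div_self : (x / (y - 1) + x) / (x / (y - 1)) = y := by
  have : y - 1 ≠ 0 := by linarith
  have : x ≠ 0 := by linarith
  field_simp
  ring

lemma div_sub_one_div_add_one : x / (y - 1) / (x / (y - 1) + 1) = x / (x + y - 1) := by
  have : y - 1 ≠ 0 := by linarith
  have : x + y - 1 ≠ 0 := by linarith
  rw [div_sub_one_add_one hy]
  field_simp

end ChangeOfVariables

open ChangeOfVariables in
theorem change_of_variables_general (H : ℝ) (g : ℝ → ℝ)
    (hfe : ∀ t : ℝ, 1 < t → ∀ T : ℝ, 0 < T →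
      deriv g t = (T + 1) ^ (2 * H - 1) * deriv g ((T + t) / (T + 1))
                  - T ^ (2 * H - 1) * deriv g ((T + t) / T)) :
    ∀ x y : ℝ, 1 < x → 1 < y →
      deriv g (x * y / (x + y - 1))
        = ((y - 1) / (x + y - 1)) ^ (2 * H - 1) * deriv g x
          + (x / (x + y - 1)) ^ (2 * H - 1) * deriv g y := by
  intro x y hx hy
  have hT : 0 < x / (y - 1) := div_pos (by linarith) (by linarith)
  have key := hfe x hx (x / (y - 1)) hT
  rw [div_sub_one_add_div_eq hx hy, div_sub_one_add_div_self hx hy] at key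
  rw [eq_inv_rpow_mul_add_div_rpow_mul (by linarith) hT.le key,
    inv_div_sub_one_add_one hy, div_sub_one_div_add_one hx hy]

/-- If g' satisfies the functional equation derived by differentiation, then after the
change of variables x = t, y = (T+t)/T one has
g'(F(x,y)) = ((y-1)/(x+y-1))^{2H-1} g'(x) + (x/(x+y-1))^{2H-1} g'(y),
with F(x,y) = xy/(x+y-1). -/
theorem change_of_variables (H : ℝ) (hH : H ∈ Set.Ioo (0 : ℝ) 1) (g : ℝ → ℝ)
    (hdiff : ∀ t ∈ Set.Ioi (1 : ℝ), DifferentiableAt ℝ g t)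
    (hfe : ∀ t : ℝ, 1 < t → ∀ T : ℝ, 0 < T →
      deriv g t = (T + 1) ^ (2 * H - 1) * deriv g ((T + t) / (T + 1))
                  - T ^ (2 * H - 1) * deriv g ((T + t) / T)) :
    ∀ x y : ℝ, 1 < x → 1 < y →
      deriv g (x * y / (x + y - 1))
        = ((y - 1) / (x + y - 1)) ^ (2 * H - 1) * deriv g x
          + (x / (x + y - 1)) ^ (2 * H - 1) * deriv g y :=
  change_of_variables_general H g hfe
end
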